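/- arXiv:1103.6075 — 3 statements merged into one kernel-verified Lean document; each statement's English description precedes it below -/
import Mathlib

section
/- Let I ⊆ ℝ be an open interval with 0 ∉ I, let α, β ∈ ℂ, and let y, z : I → ℂ be differentiable functions satisfying the P_III system with parameters (α, β, 1) in the variable ξ, with y nonvanishing on I. Define ỹ := 2ξ/y and z̃ := y·(α − β − yz)/(2ξ). Then ỹ and z̃ are differentiable on I and satisfy the P_III system with parameters (−β − 1/2, −α − 1/2, 1): ξ·ỹ′ = 2ỹ²z̃ − ỹ² − 2(−β − 1/2)·ỹ + 2ξ and ξ·z̃′ = −2ỹz̃² + 2ỹz̃ + 2(−β − 1/2)·z̃ + (−α − 1/2) − (−β − 1/2). (This is the Bäcklund transformation σ of the third Painlevé equation.) -/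
/-- The P_III system with parameters `(α, β, c)` in the variable `ξ`. -/
def PIIIsys (α β c : ℂ) (I : Set ℝ) (y z : ℝ → ℂ) : Prop :=
  ∀ ξ ∈ I,
    (ξ : ℂ) * deriv y ξ
      = 2 * (y ξ) ^ 2 * z ξ - (y ξ) ^ 2 - 2 * α * y ξ + 2 * c * (ξ : ℂ) ∧
    (ξ : ℂ) * deriv z ξ
      = -2 * y ξ * (z ξ) ^ 2 + 2 * y ξ * z ξ + 2 * α * z ξ + β - α

theorem PIII_backlund_sigma
    (I : Set ℝ) (hI : IsOpen I) (hI0 : (0 : ℝ) ∉ I)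
    (α β : ℂ) (y z : ℝ → ℂ)
    (hy : DifferentiableOn ℝ y I) (hz : DifferentiableOn ℝ z I)
    (hsys : PIIIsys α β 1 I y z)
    (hy0 : ∀ ξ ∈ I, y ξ ≠ 0)
    (yt zt : ℝ → ℂ)
    (hyt : yt = fun (ξ : ℝ) => 2 * (ξ : ℂ) / y ξ)
    (hzt : zt = fun (ξ : ℝ) => y ξ * (α - β - y ξ * z ξ) / (2 * (ξ : ℂ))) :
    DifferentiableOn ℝ yt I ∧ DifferentiableOn ℝ zt I ∧
    PIIIsys (-β - 1 / 2) (-α - 1 / 2) 1 I yt zt := by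
  have hmem : ∀ ξ ∈ I, I ∈ nhds ξ := fun ξ h => hI.mem_nhds h
  have hyd : ∀ ξ ∈ I, HasDerivAt y (deriv y ξ) ξ := fun ξ h =>
    ((hy ξ h).differentiableAt (hmem ξ h)).hasDerivAt
  have hzd : ∀ ξ ∈ I, HasDerivAt z (deriv z ξ) ξ := fun ξ h =>
    ((hz ξ h).differentiableAt (hmem ξ h)).hasDerivAt
  have hxne : ∀ ξ ∈ I, ((ξ : ℝ) : ℂ) ≠ 0 := fun ξ h =>
    Complex.ofReal_ne_zero.mpr (fun h0 => hI0 (h0 ▸ h))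
  have hlin : ∀ ξ : ℝ, HasDerivAt (fun t : ℝ => 2 * (t : ℂ)) 2 ξ := by
    intro ξ
    simpa using (Complex.ofRealCLM.hasDerivAt (x := ξ)).const_mul (2 : ℂ)
  have hytd : ∀ ξ ∈ I,
      HasDerivAt yt ((2 * y ξ - 2 * (ξ : ℂ) * deriv y ξ) / (y ξ) ^ 2) ξ := by
    intro ξ h
    rw [hyt]
    exact (hlin ξ).div (hyd ξ h) (hy0 ξ h)
  have hztd : ∀ ξ ∈ I,
      HasDerivAt zt
        (((deriv y ξ * (α - β - y ξ * z ξ)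
            + y ξ * (0 - (deriv y ξ * z ξ + y ξ * deriv z ξ))) * (2 * (ξ : ℂ))
          - y ξ * (α - β - y ξ * z ξ) * 2) / (2 * (ξ : ℂ)) ^ 2) ξ := by
    intro ξ h
    rw [hzt]
    have hnum : HasDerivAt (fun t : ℝ => y t * (α - β - y t * z t))
        (deriv y ξ * (α - β - y ξ * z ξ)
          + y ξ * (0 - (deriv y ξ * z ξ + y ξ * deriv z ξ))) ξ :=
      (hyd ξ h).mul ((hasDerivAt_const ξ (α - β)).sub ((hyd ξ h).mul (hzd ξ h)))
    exact hnum.div (hlin ξ) (by simpa using hxne ξ h)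
  refine ⟨fun ξ h => ((hytd ξ h).differentiableAt).differentiableWithinAt,
    fun ξ h => ((hztd ξ h).differentiableAt).differentiableWithinAt, ?_⟩
  intro ξ h
  have hx := hxne ξ h
  have hY := hy0 ξ h
  have e1 := (hsys ξ h).1
  have e2 := (hsys ξ h).2
  have hdy : deriv y ξ
      = (2 * (y ξ) ^ 2 * z ξ - (y ξ) ^ 2 - 2 * α * y ξ + 2 * (ξ : ℂ)) / (ξ : ℂ) := by
    rw [eq_div_iff hx]; linear_combination e1
  have hdz : deriv z ξ
      = (-2 * y ξ * (z ξ) ^ 2 + 2 * y ξ * z ξ + 2 * α * z ξ + β - α) / (ξ : ℂ) := by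
    rw [eq_div_iff hx]; linear_combination e2
  have h2x : 2 * ((ξ : ℝ) : ℂ) ≠ 0 := mul_ne_zero two_ne_zero hx
  have hY2 : (y ξ) ^ 2 ≠ 0 := pow_ne_zero _ hY
  constructor
  · have hR : 2 * (yt ξ) ^ 2 * zt ξ - (yt ξ) ^ 2 - 2 * (-β - 1 / 2) * yt ξ
        + 2 * 1 * (ξ : ℂ)
        = (4 * (ξ : ℂ) * y ξ * (α - β - y ξ * z ξ) - 4 * (ξ : ℂ) ^ 2
            + (4 * β + 2) * (ξ : ℂ) * y ξ + 2 * (ξ : ℂ) * (y ξ) ^ 2) / (y ξ) ^ 2 := by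
      rw [hyt, hzt]
      simp only
      rw [eq_div_iff hY2]
      field_simp
      ring
    rw [(hytd ξ h).deriv, hR, ← mul_div_assoc, div_eq_div_iff hY2 hY2]
    linear_combination (-2 * (ξ : ℂ) * (y ξ) ^ 2) * e1
  · have hA : yt ξ * zt ξ = α - β - y ξ * z ξ := by
      rw [hyt, hzt]
      simp only
      field_simp
    have hB : zt ξ * (2 * (ξ : ℂ)) = y ξ * (α - β - y ξ * z ξ) := by
      rw [hzt]
      simp only
      field_simp
    have hR : -2 * yt ξ * (zt ξ) ^ 2 + 2 * yt ξ * zt ξ + 2 * (-β - 1 / 2) * zt ξ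
        + (-α - 1 / 2) - (-β - 1 / 2)
        = (-2 * y ξ * (α - β - y ξ * z ξ) ^ 2 + 4 * (ξ : ℂ) * (α - β - y ξ * z ξ)
            + (-2 * β - 1) * y ξ * (α - β - y ξ * z ξ)
            + 2 * (ξ : ℂ) * (β - α)) / (2 * (ξ : ℂ)) := by
      rw [eq_div_iff h2x]
      linear_combination (4 * (ξ : ℂ) - 4 * (ξ : ℂ) * zt ξ) * hA
        + (-2 * β - 1 - 2 * (α - β - y ξ * z ξ)) * hB
    rw [(hztd ξ h).deriv, hR, ← mul_div_assoc,
      div_eq_div_iff (pow_ne_zero 2 h2x) h2x]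
    linear_combination (4 * (ξ : ℂ) ^ 2 * (α - β - 2 * y ξ * z ξ)) * e1
      + (-4 * (ξ : ℂ) ^ 2 * (y ξ) ^ 2) * e2
end

section
/- Let I ⊆ ℝ be an open interval with 0 ∉ I, let α, β ∈ ℂ, and let y, z : I → ℂ be differentiable functions satisfying the P_III system with parameters (α, β, 1) in the variable ξ, with z nonvanishing on I. Define ỹ := y + (β − α)/z and z̃ := z. Then ỹ and z̃ are differentiable on I and satisfy the P_III system with parameters (β, α, 1): ξ·ỹ′ = 2ỹ²z̃ − ỹ² − 2β·ỹ + 2ξ and ξ·z̃′ = −2ỹz̃² + 2ỹz̃ + 2β·z̃ + α − β. (This is the Bäcklund transformation πσ of the third Painlevé equation, which interchanges the parameters α and β.) -/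
/-- `y'`, `z'` stand for the derivatives of `y`, `z` at `ξ`, so that `y' - (β - α) z' / z²` is the
derivative of `y + (β - α) / z`. -/
theorem piSigma_equations {K : Type*} [Field K] {α β c ξ y z y' z' : K} (hz : z ≠ 0)
    (hy' : ξ * y' = 2 * y ^ 2 * z - y ^ 2 - 2 * α * y + 2 * c * ξ)
    (hz' : ξ * z' = -2 * y * z ^ 2 + 2 * y * z + 2 * α * z + β - α) :
    ξ * (y' - (β - α) * z' / z ^ 2)
        = 2 * (y + (β - α) / z) ^ 2 * z - (y + (β - α) / z) ^ 2 - 2 * β * (y + (β - α) / z)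
          + 2 * c * ξ ∧
      ξ * z' = -2 * (y + (β - α) / z) * z ^ 2 + 2 * (y + (β - α) / z) * z + 2 * β * z + α - β := by
  constructor
  · field_simp
    linear_combination z ^ 2 * hy' - (β - α) * hz'
  · field_simp
    linear_combination hz'

theorem HasDerivAt.add_const_div {𝕜 𝕜' : Type*} [NontriviallyNormedField 𝕜]
    [NontriviallyNormedField 𝕜'] [NormedAlgebra 𝕜 𝕜'] {y z : 𝕜 → 𝕜'} {y' z' : 𝕜'} {x : 𝕜}
    (hy : HasDerivAt y y' x) (hz : HasDerivAt z z' x) (hzx : z x ≠ 0) (a : 𝕜') :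
    HasDerivAt (fun t => y t + a / z t) (y' - a * z' / z x ^ 2) x :=
  (hy.add ((hasDerivAt_const x a).fun_div hz hzx)).congr_deriv (by ring)

theorem PIIIsys.piSigma {α β c : ℂ} {I : Set ℝ} {y z : ℝ → ℂ} (hI : IsOpen I)
    (hy : DifferentiableOn ℝ y I) (hz : DifferentiableOn ℝ z I) (hz0 : ∀ ξ ∈ I, z ξ ≠ 0)
    (hsys : PIIIsys α β c I y z) :
    PIIIsys β α c I (fun ξ => y ξ + (β - α) / z ξ) z := by
  intro ξ hξ
  have hy' := (hy.differentiableAt (hI.mem_nhds hξ)).hasDerivAt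
  have hz' := (hz.differentiableAt (hI.mem_nhds hξ)).hasDerivAt
  rw [(hy'.add_const_div hz' (hz0 ξ hξ) (β - α)).deriv]
  exact piSigma_equations (hz0 ξ hξ) (hsys ξ hξ).1 (hsys ξ hξ).2

theorem PIII_backlund_pi_sigma_general
    (I : Set ℝ) (hI : IsOpen I)
    (α β : ℂ) (y z : ℝ → ℂ)
    (hy : DifferentiableOn ℝ y I) (hz : DifferentiableOn ℝ z I)
    (hsys : PIIIsys α β 1 I y z)
    (hz0 : ∀ ξ ∈ I, z ξ ≠ 0)
    (yt zt : ℝ → ℂ)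
    (hyt : yt = fun (ξ : ℝ) => y ξ + (β - α) / z ξ)
    (hzt : zt = z) :
    DifferentiableOn ℝ yt I ∧ DifferentiableOn ℝ zt I ∧
    PIIIsys β α 1 I yt zt := by
  subst hyt hzt
  exact ⟨hy.add ((differentiableOn_const _).div hz hz0), hz, hsys.piSigma hI hy hz hz0⟩

theorem PIII_backlund_pi_sigma
    (I : Set ℝ) (hI : IsOpen I) (hI0 : (0 : ℝ) ∉ I)
    (α β : ℂ) (y z : ℝ → ℂ)
    (hy : DifferentiableOn ℝ y I) (hz : DifferentiableOn ℝ z I)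
    (hsys : PIIIsys α β 1 I y z)
    (hz0 : ∀ ξ ∈ I, z ξ ≠ 0)
    (yt zt : ℝ → ℂ)
    (hyt : yt = fun (ξ : ℝ) => y ξ + (β - α) / z ξ)
    (hzt : zt = z) :
    DifferentiableOn ℝ yt I ∧ DifferentiableOn ℝ zt I ∧
    PIIIsys β α 1 I yt zt :=
  PIII_backlund_pi_sigma_general I hI α β y z hy hz hsys hz0 yt zt hyt hzt
end

section
/- Let I ⊆ ℝ be an open interval with 0 ∉ I, let α, β ∈ ℂ, and let y, z : I → ℂ be differentiable functions satisfying the P_III system with parameters (α, β, 1) in the variable ξ. Define on the reflected interval −I := {−ξ : ξ ∈ I} the functions ỹ(ξ) := −y(−ξ) and z̃(ξ) := 1 − z(−ξ). Then ỹ and z̃ are differentiable on −I and satisfy the P_III system with parameters (α, −β, 1): ξ·ỹ′(ξ) = 2ỹ²z̃ − ỹ² − 2α·ỹ + 2ξ and ξ·z̃′(ξ) = −2ỹz̃² + 2ỹz̃ + 2α·z̃ + (−β) − α. (This is the Bäcklund transformation s₁^R of the third Painlevé equation.) -/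
theorem DifferentiableOn.comp_neg {𝕜 F : Type*} [NontriviallyNormedField 𝕜]
    [NormedAddCommGroup F] [NormedSpace 𝕜 F] {f : 𝕜 → F} {s : Set 𝕜}
    (hf : DifferentiableOn 𝕜 f s) : DifferentiableOn 𝕜 (fun x => f (-x)) {x | -x ∈ s} :=
  hf.comp (differentiableOn_neg _) fun _ hx => hx

theorem PIIIsys.reflect {α β c : ℂ} {I : Set ℝ} {y z : ℝ → ℂ} (h : PIIIsys α β c I y z) :
    PIIIsys α (-β) c {ξ | -ξ ∈ I} (fun ξ => -y (-ξ)) (fun ξ => 1 - z (-ξ)) := by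
  intro ξ hξ
  obtain ⟨hy, hz⟩ := h (-ξ) hξ
  have hy' : deriv (fun ξ => -y (-ξ)) ξ = deriv y (-ξ) := by
    rw [deriv.fun_neg, deriv_comp_neg, neg_neg]
  have hz' : deriv (fun ξ => 1 - z (-ξ)) ξ = deriv z (-ξ) := by
    rw [deriv_const_sub, deriv_comp_neg, neg_neg]
  push_cast at hy hz
  rw [hy', hz']
  constructor
  · linear_combination -hy
  · linear_combination -hz

theorem PIII_backlund_s1R_general
    (I : Set ℝ)
    (α β : ℂ) (y z : ℝ → ℂ)
    (hy : DifferentiableOn ℝ y I) (hz : DifferentiableOn ℝ z I)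
    (hsys : PIIIsys α β 1 I y z)
    (yt zt : ℝ → ℂ)
    (hyt : yt = fun (ξ : ℝ) => -y (-ξ))
    (hzt : zt = fun (ξ : ℝ) => 1 - z (-ξ)) :
    DifferentiableOn ℝ yt {ξ : ℝ | -ξ ∈ I} ∧
    DifferentiableOn ℝ zt {ξ : ℝ | -ξ ∈ I} ∧
    PIIIsys α (-β) 1 {ξ : ℝ | -ξ ∈ I} yt zt := by
  subst hyt hzt
  exact ⟨hy.comp_neg.neg, hz.comp_neg.const_sub 1, hsys.reflect⟩

theorem PIII_backlund_s1R
    (I : Set ℝ) (hI : IsOpen I) (hI0 : (0 : ℝ) ∉ I)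
    (α β : ℂ) (y z : ℝ → ℂ)
    (hy : DifferentiableOn ℝ y I) (hz : DifferentiableOn ℝ z I)
    (hsys : PIIIsys α β 1 I y z)
    (yt zt : ℝ → ℂ)
    (hyt : yt = fun (ξ : ℝ) => -y (-ξ))
    (hzt : zt = fun (ξ : ℝ) => 1 - z (-ξ)) :
    DifferentiableOn ℝ yt {ξ : ℝ | -ξ ∈ I} ∧
    DifferentiableOn ℝ zt {ξ : ℝ | -ξ ∈ I} ∧
    PIIIsys α (-β) 1 {ξ : ℝ | -ξ ∈ I} yt zt :=
  PIII_backlund_s1R_general I α β y z hy hz hsys yt zt hyt hzt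
end
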